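/- arXiv:0908.4041 — 3 statements merged into one kernel-verified Lean document; each statement's English description precedes it below -/
import Mathlib

section
/- For the separating triangle with vertices (B+1+k(B+2), 0), (B+1+k(B+2), 2), (B+3+k(B+2), 0), the open segment joining p_{i,j} and p_{i',j'} intersects this triangle whenever i ≤ k+1 < k+2 ≤ i', i.e., points of groups on opposite sides of the k-th notch are mutually blocked. -/
/-!
All points `p_{i,j}` lie on the line `y = 1`, and the triangle `Δ_k` meets that line in the
interval `[a, a + 1]`, where `a = B + 1 + k (B + 2)`. Groups `i ≤ k + 1` end at `x ≤ a - 1` and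
groups `i' ≥ k + 2` start at `x ≥ a + 2`, so the segment passes through `(a + 1/2, 1)`, which is
the midpoint of the vertex `(a, 2)` and the midpoint `(a + 1, 0)` of the base.
-/

open Set

theorem mk_mem_openSegment_of_mem_Ioo {𝕜 E : Type*} [Field 𝕜] [LinearOrder 𝕜]
    [IsStrictOrderedRing 𝕜] [AddCommGroup E] [Module 𝕜 E] {x₁ x₂ c : 𝕜} (y : E)
    (hc : c ∈ Ioo x₁ x₂) : (c, y) ∈ openSegment 𝕜 (x₁, y) (x₂, y) := by
  rw [← Prod.image_mk_openSegment_left, openSegment_eq_Ioo (hc.1.trans hc.2)]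
  exact mem_image_of_mem _ hc

theorem notch_center_mem_convexHull (a : ℝ) :
    (a + 1 / 2, 1) ∈ convexHull ℝ ({(a, 0), (a, 2), (a + 2, 0)} : Set (ℝ × ℝ)) := by
  rw [insert_comm, ← convexJoin_singleton_segment]
  refine mem_convexJoin.2 ⟨(a, 2), rfl, (a + 1, 0), ?_, ?_⟩ <;>
    exact ⟨1 / 2, 1 / 2, by norm_num, by norm_num, by norm_num, by ext <;> norm_num; ring⟩

theorem group_coord_lt_notch_center {B k i j : ℕ} (hik : i ≤ k + 1) (hjB : j ≤ B) :
    ((i : ℝ) - 1) * (B + 2) + j < B + 1 + k * (B + 2) + 1 / 2 := by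
  have hi : (i : ℝ) - 1 ≤ k := by
    have : (i : ℝ) ≤ k + 1 := by exact_mod_cast hik
    linarith
  have hj : (j : ℝ) ≤ B := by exact_mod_cast hjB
  calc ((i : ℝ) - 1) * (B + 2) + j ≤ k * (B + 2) + B := by gcongr
    _ < B + 1 + k * (B + 2) + 1 / 2 := by linarith

theorem notch_center_lt_group_coord {B k i j : ℕ} (hki : k + 2 ≤ i) (hj : 1 ≤ j) :
    (B + 1 + k * (B + 2) + 1 / 2 : ℝ) < ((i : ℝ) - 1) * (B + 2) + j := by
  have hi : (k : ℝ) + 1 ≤ i - 1 := by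
    have : (k : ℝ) + 2 ≤ i := by exact_mod_cast hki
    linarith
  have hj : (1 : ℝ) ≤ j := by exact_mod_cast hj
  calc (B + 1 + k * (B + 2) + 1 / 2 : ℝ) < (k + 1) * (B + 2) + 1 := by linarith
    _ ≤ ((i : ℝ) - 1) * (B + 2) + j := by gcongr

theorem segment_across_notch_blocked_general (B k i i' j j' : ℕ)
    (hjB : j ≤ B) (hj' : 1 ≤ j')
    (hik : i ≤ k + 1) (hki' : k + 2 ≤ i') :
    ∀ p : ℕ → ℕ → ℝ × ℝ,
    (∀ a b, p a b = (((a : ℝ) - 1) * ((B : ℝ) + 2) + (b : ℝ), 1)) →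
    (openSegment ℝ (p i j) (p i' j') ∩
      convexHull ℝ
        {(((B : ℝ) + 1 + (k : ℝ) * ((B : ℝ) + 2)), (0 : ℝ)),
         (((B : ℝ) + 1 + (k : ℝ) * ((B : ℝ) + 2)), (2 : ℝ)),
         (((B : ℝ) + 3 + (k : ℝ) * ((B : ℝ) + 2)), (0 : ℝ))}).Nonempty := by
  intro p hp
  set a : ℝ := B + 1 + k * (B + 2)
  have hbase : (B : ℝ) + 3 + k * (B + 2) = a + 2 := by ring
  rw [hp, hp, hbase]
  exact ⟨(a + 1 / 2, 1), mk_mem_openSegment_of_mem_Ioo 1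
    ⟨group_coord_lt_notch_center hik hjB, notch_center_lt_group_coord hki' hj'⟩,
    notch_center_mem_convexHull a⟩

theorem segment_across_notch_blocked (n B k i i' j j' : ℕ)
    (hj : 1 ≤ j) (hjB : j ≤ B) (hj' : 1 ≤ j') (hj'B : j' ≤ B)
    (hi : 1 ≤ i) (hi' : i' ≤ n) (hk : k ≤ n - 2)
    (hik : i ≤ k + 1) (hki' : k + 2 ≤ i') :
    ∀ p : ℕ → ℕ → ℝ × ℝ,
    (∀ a b, p a b = (((a : ℝ) - 1) * ((B : ℝ) + 2) + (b : ℝ), 1)) →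
    (openSegment ℝ (p i j) (p i' j') ∩
      convexHull ℝ
        {(((B : ℝ) + 1 + (k : ℝ) * ((B : ℝ) + 2)), (0 : ℝ)),
         (((B : ℝ) + 1 + (k : ℝ) * ((B : ℝ) + 2)), (2 : ℝ)),
         (((B : ℝ) + 3 + (k : ℝ) * ((B : ℝ) + 2)), (0 : ℝ))}).Nonempty :=
  segment_across_notch_blocked_general B k i i' j j' hjB hj' hik hki'
end

section
/- The open segment from p_0 = (1, n(B+2)−2) to any point p_{i,j} = ((i−1)(B+2)+j, 1) is disjoint from every separating triangle Δ_k, 0 ≤ k ≤ n−2, i.e., p_0 sees every point p_{i,j}, provided n ≥ 2 and B ≥ 1. -/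
/-!
Each triangle `Δ_k` is cut off from the segment by a line. If `p_{i,j}` lies in a block
left of `Δ_k` (`i ≤ k + 1`), the vertical line through the leg `x = B + 1 + k(B + 2)` does;
otherwise the line through the hypotenuse, `x + y = B + 3 + k(B + 2)`, has both `p_0` and
`p_{i,j}` strictly above it.
-/

theorem segment_inter_convexHull_eq_empty_of_lt_of_le {E : Type*} [AddCommGroup E]
    [Module ℝ E] (f : E →ₗ[ℝ] ℝ) (c : ℝ) {x y : E} {s : Set E}
    (hx : f x < c) (hy : f y < c) (hs : ∀ z ∈ s, c ≤ f z) :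
    segment ℝ x y ∩ convexHull ℝ s = ∅ :=
  Set.eq_empty_of_forall_notMem fun z ⟨hseg, hhull⟩ =>
    (show f z < c from (convex_halfSpace_lt f.isLinear c).segment_subset hx hy hseg).not_ge
      (convexHull_min hs (convex_halfSpace_ge f.isLinear c) hhull)

theorem root_sees_all_points_general (n B i j : ℕ)
    (hn : 2 ≤ n) (hB : 1 ≤ B)
    (hj : 1 ≤ j) (hjB : j ≤ B) :
    ∀ p0 : ℝ × ℝ, p0 = (1, (n : ℝ) * ((B : ℝ) + 2) - 2) →
    ∀ pij : ℝ × ℝ, pij = (((i : ℝ) - 1) * ((B : ℝ) + 2) + (j : ℝ), 1) →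
    ∀ k, k ≤ n - 2 →
    segment ℝ p0 pij ∩
      convexHull ℝ
        {(((B : ℝ) + 1 + (k : ℝ) * ((B : ℝ) + 2)), (0 : ℝ)),
         (((B : ℝ) + 1 + (k : ℝ) * ((B : ℝ) + 2)), (2 : ℝ)),
         (((B : ℝ) + 3 + (k : ℝ) * ((B : ℝ) + 2)), (0 : ℝ))} = ∅ := by
  intro p0 rfl pij rfl k hk
  have hB' : (1 : ℝ) ≤ B := by exact_mod_cast hB
  have hk' : (k : ℝ) + 2 ≤ n := by exact_mod_cast (by omega : k + 2 ≤ n)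
  rcases le_or_gt i (k + 1) with hik | hik
  · have hi' : (i : ℝ) ≤ k + 1 := by exact_mod_cast hik
    have hj' : (j : ℝ) ≤ B := by exact_mod_cast hjB
    refine segment_inter_convexHull_eq_empty_of_lt_of_le (LinearMap.fst ℝ ℝ ℝ)
      (B + 1 + k * (B + 2)) ?_ ?_ ?_
    · simp only [LinearMap.fst_apply]
      nlinarith [k.cast_nonneg (α := ℝ)]
    · simp only [LinearMap.fst_apply]
      nlinarith
    · simp only [Set.forall_mem_insert, Set.mem_singleton_iff, forall_eq, LinearMap.fst_apply]
      refine ⟨?_, ?_, ?_⟩ <;> linarith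
  · have hi' : (k : ℝ) + 2 ≤ i := by exact_mod_cast hik
    have hj' : (1 : ℝ) ≤ j := by exact_mod_cast hj
    refine segment_inter_convexHull_eq_empty_of_lt_of_le
      (-(LinearMap.fst ℝ ℝ ℝ + LinearMap.snd ℝ ℝ ℝ)) (-(B + 3 + k * (B + 2))) ?_ ?_ ?_
    · simp only [LinearMap.neg_apply, LinearMap.add_apply, LinearMap.fst_apply,
        LinearMap.snd_apply]
      nlinarith
    · simp only [LinearMap.neg_apply, LinearMap.add_apply, LinearMap.fst_apply,
        LinearMap.snd_apply]
      nlinarith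
    · simp only [Set.forall_mem_insert, Set.mem_singleton_iff, forall_eq, LinearMap.neg_apply,
        LinearMap.add_apply, LinearMap.fst_apply, LinearMap.snd_apply]
      refine ⟨?_, ?_, ?_⟩ <;> linarith

theorem root_sees_all_points (n B i j : ℕ)
    (hn : 2 ≤ n) (hB : 1 ≤ B)
    (hi : 1 ≤ i) (hin : i ≤ n) (hj : 1 ≤ j) (hjB : j ≤ B) :
    ∀ p0 : ℝ × ℝ, p0 = (1, (n : ℝ) * ((B : ℝ) + 2) - 2) →
    ∀ pij : ℝ × ℝ, pij = (((i : ℝ) - 1) * ((B : ℝ) + 2) + (j : ℝ), 1) →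
    ∀ k, k ≤ n - 2 →
    segment ℝ p0 pij ∩
      convexHull ℝ
        {(((B : ℝ) + 1 + (k : ℝ) * ((B : ℝ) + 2)), (0 : ℝ)),
         (((B : ℝ) + 1 + (k : ℝ) * ((B : ℝ) + 2)), (2 : ℝ)),
         (((B : ℝ) + 3 + (k : ℝ) * ((B : ℝ) + 2)), (0 : ℝ))} = ∅ :=
  root_sees_all_points_general n B i j hn hB hj hjB
end

section
/- If a : Fin (3n) → ℕ satisfies 4·a i > B and 2·a i < B for all i, and g : Fin (3n) → Fin n is such that for every k, ∑_{i : g i = k} a i = B, then every fiber g⁻¹(k) has exactly 3 elements. -/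
/-! Summing `2 * a i < B < 4 * a i` over a fiber, whose total weight is `B`, gives
`2 * B < #s * B < 4 * B`. -/

namespace Finset

variable {ι : Type*} {s : Finset ι} {a : ι → ℕ} {B m : ℕ}

theorem card_lt_of_sum_eq_of_lt_mul (hs : s.Nonempty) (hsum : ∑ i ∈ s, a i = B)
    (h : ∀ i ∈ s, B < m * a i) : #s < m := by
  have key : #s * B < m * B := calc
    #s * B = ∑ _i ∈ s, B := by rw [sum_const, smul_eq_mul]
    _ < ∑ i ∈ s, m * a i := sum_lt_sum_of_nonempty hs h
    _ = m * B := by rw [← mul_sum, hsum]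
  exact Nat.lt_of_mul_lt_mul_right key

theorem lt_card_of_sum_eq_of_mul_lt (hs : s.Nonempty) (hsum : ∑ i ∈ s, a i = B)
    (h : ∀ i ∈ s, m * a i < B) : m < #s := by
  have key : m * B < #s * B := calc
    m * B = ∑ i ∈ s, m * a i := by rw [← mul_sum, hsum]
    _ < ∑ _i ∈ s, B := sum_lt_sum_of_nonempty hs h
    _ = #s * B := by rw [sum_const, smul_eq_mul]
  exact Nat.lt_of_mul_lt_mul_right key

end Finset

theorem fibers_card_three (n B : ℕ) (a : Fin (3 * n) → ℕ)
    (hlo : ∀ i, 4 * a i > B) (hhi : ∀ i, 2 * a i < B)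
    (g : Fin (3 * n) → Fin n)
    (hg : ∀ k, ∑ i ∈ Finset.univ.filter (fun i => g i = k), a i = B) :
    ∀ k, (Finset.univ.filter (fun i => g i = k)).card = 3 := by
  intro k
  have hB : 0 < B := (Nat.zero_le _).trans_lt (hhi ⟨0, by have := k.pos; omega⟩)
  have hne : (Finset.univ.filter (fun i => g i = k)).Nonempty :=
    Finset.nonempty_of_sum_ne_zero ((hg k).symm ▸ hB.ne')
  have hlt := Finset.card_lt_of_sum_eq_of_lt_mul hne (hg k) (fun i _ => hlo i)
  have hgt := Finset.lt_card_of_sum_eq_of_mul_lt hne (hg k) (fun i _ => hhi i)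
  omega
end
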